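/- arXiv:1307.8192 — 2 statements merged into one kernel-verified Lean document; each statement's English description precedes it below -/
import Mathlib

section
/- In Morpion Solitaire 5D, no play of length 139 exists; equivalently, the score of every play of Morpion Solitaire 5D is at most 138. -/
/-- The four directions of Morpion Solitaire. -/
def Dir : Set (ℤ × ℤ) := {(1, 0), (0, 1), (1, 1), (1, -1)}

/-- The line (segment) of length 5 starting at `q` in direction `d`:
the set `{q + t • d : t ∈ {0,1,2,3,4}}`. -/
def seg (q d : ℤ × ℤ) : Set (ℤ × ℤ) := {p | ∃ t : ℕ, t ≤ 4 ∧ p = q + (t : ℤ) • d}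

/-- The initial configuration of 36 crosses. -/
def S0 : Set (ℤ × ℤ) := {p |
  ((p.2 = 0 ∨ p.2 = 9) ∧ 3 ≤ p.1 ∧ p.1 ≤ 6) ∨
  ((p.1 = 0 ∨ p.1 = 9) ∧ 3 ≤ p.2 ∧ p.2 ≤ 6) ∨
  ((p.1 = 3 ∨ p.1 = 6) ∧ ((0 ≤ p.2 ∧ p.2 ≤ 3) ∨ (6 ≤ p.2 ∧ p.2 ≤ 9))) ∨
  ((p.2 = 3 ∨ p.2 = 6) ∧ ((0 ≤ p.1 ∧ p.1 ≤ 3) ∨ (6 ≤ p.1 ∧ p.1 ≤ 9)))}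

/-- A play of Morpion Solitaire 5D of length `N`: crosses `p i`, and lines
`seg (q i) (d i)` in directions `d i ∈ Dir`, subject to the rules of 5D.
(Index `i : Fin N` corresponds to move `i + 1`.) -/
structure Play (N : ℕ) where
  p : Fin N → ℤ × ℤ
  q : Fin N → ℤ × ℤ
  d : Fin N → ℤ × ℤ
  d_mem : ∀ i, d i ∈ Dir
  /-- rule (1): the new cross is placed on an empty point -/
  p_not_S0 : ∀ i, p i ∉ S0
  p_new : ∀ i j : Fin N, j < i → p j ≠ p i
  /-- rule (2): the new line passes through the new cross -/
  p_mem : ∀ i, p i ∈ seg (q i) (d i)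
  /-- rule (3): the new line passes only through existing crosses -/
  seg_sub : ∀ i, seg (q i) (d i) ⊆ S0 ∪ {x | ∃ j : Fin N, j ≤ i ∧ p j = x}
  /-- rule (4): two lines in the same direction are disjoint -/
  disj : ∀ i j : Fin N, j < i → d j = d i → seg (q i) (d i) ∩ seg (q j) (d j) = ∅

/-! Each line consists of 5 points and, since lines of equal direction are disjoint, every point
lies on at most 4 lines. A cross lies only on lines drawn at or after its own move, so the last
three crosses lie on at most 1, 2 and 3 lines. Double counting the incidences between the `N`
lines and the at most `36 + N` points of the final position gives `5 N ≤ 4 (36 + N) - 6`. -/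

open Finset

def segFinset (q d : ℤ × ℤ) : Finset (ℤ × ℤ) :=
  (range 5).image fun t : ℕ => q + (t : ℤ) • d

@[simp]
lemma coe_segFinset (q d : ℤ × ℤ) : (segFinset q d : Set (ℤ × ℤ)) = seg q d := by
  ext x
  simp [segFinset, seg, Nat.lt_succ_iff, eq_comm]

lemma card_segFinset (q : ℤ × ℤ) {d : ℤ × ℤ} (hd : d ≠ 0) : #(segFinset q d) = 5 := by
  rw [segFinset, card_image_of_injective _ ?_, card_range]
  intro s t hst
  exact_mod_cast smul_left_injective ℤ hd (add_left_cancel hst)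

lemma Dir_eq : Dir = ↑({(1, 0), (0, 1), (1, 1), (1, -1)} : Finset (ℤ × ℤ)) := by
  simp [Dir]

lemma ne_zero_of_mem_Dir {d : ℤ × ℤ} (hd : d ∈ Dir) : d ≠ 0 := by
  rcases hd with rfl | rfl | rfl | rfl <;> decide

instance decidableMemS0 : DecidablePred (· ∈ S0) := fun _ => by
  simp only [S0, Set.mem_ofPred_eq]
  infer_instance

-- Mathlib's order on `ℤ` comes from a noncomputable instance; the kernel still evaluates
-- `#S0Finset`.
noncomputable def S0Finset : Finset (ℤ × ℤ) := (Icc 0 9 ×ˢ Icc 0 9).filter (· ∈ S0)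

lemma card_S0Finset : #S0Finset = 36 := by decide

lemma coe_S0Finset : (S0Finset : Set (ℤ × ℤ)) = S0 := by
  ext ⟨a, b⟩
  simp only [S0Finset, coe_filter, mem_product, mem_Icc, Set.mem_ofPred_eq, and_iff_right_iff_imp]
  simp only [S0, Set.mem_ofPred_eq]
  omega

lemma sum_range_min_four_sub_add_six_le {n : ℕ} (hn : 3 ≤ n) :
    ∑ k ∈ range n, min 4 (n - k) + 6 ≤ 4 * n := by
  induction n, hn using Nat.le_induction with
  | base => decide
  | succ n _ ih =>
    rw [sum_range_succ']
    simp only [Nat.add_sub_add_right]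
    have : min 4 (n + 1 - 0) ≤ 4 := min_le_left _ _
    omega

namespace Play

variable {N : ℕ} (P : Play N)

def line (i : Fin N) : Finset (ℤ × ℤ) := segFinset (P.q i) (P.d i)

def numLinesThrough (x : ℤ × ℤ) : ℕ := #{i | x ∈ P.line i}

def crosses : Finset (ℤ × ℤ) := univ.image P.p

noncomputable def points : Finset (ℤ × ℤ) := S0Finset ∪ P.crosses

lemma mem_line {x : ℤ × ℤ} {i : Fin N} : x ∈ P.line i ↔ x ∈ seg (P.q i) (P.d i) := by
  rw [line, ← mem_coe, coe_segFinset]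

lemma card_line (i : Fin N) : #(P.line i) = 5 :=
  card_segFinset _ (ne_zero_of_mem_Dir (P.d_mem i))

lemma p_injective : Function.Injective P.p := by
  intro i j h
  by_contra hij
  rcases Ne.lt_or_gt hij with hlt | hlt
  exacts [P.p_new j i hlt h, P.p_new i j hlt h.symm]

lemma disjoint_crosses_S0Finset : Disjoint S0Finset P.crosses := by
  simp only [disjoint_right, crosses, mem_image, mem_univ, true_and, forall_exists_index]
  rintro _ k rfl h
  exact P.p_not_S0 k (coe_S0Finset ▸ h)

lemma line_subset_points (i : Fin N) : P.line i ⊆ P.points := by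
  intro x hx
  rcases P.seg_sub i (P.mem_line.mp hx) with h | ⟨j, -, rfl⟩
  · exact mem_union_left _ (by rwa [← mem_coe, coe_S0Finset])
  · exact mem_union_right _ (mem_image_of_mem _ (mem_univ j))

lemma disjoint_line {i j : Fin N} (hij : i ≠ j) (hd : P.d i = P.d j) :
    Disjoint (P.line i) (P.line j) := by
  rw [← disjoint_coe, line, line, coe_segFinset, coe_segFinset, Set.disjoint_iff_inter_eq_empty]
  rcases Ne.lt_or_gt hij with hlt | hlt
  · rw [Set.inter_comm]
    exact P.disj j i hlt hd
  · exact P.disj i j hlt hd.symm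

lemma le_of_p_mem_line {k i : Fin N} (h : P.p k ∈ P.line i) : k ≤ i := by
  rcases P.seg_sub i (P.mem_line.mp h) with h | ⟨j, hji, hj⟩
  · exact absurd h (P.p_not_S0 k)
  · exact P.p_injective hj ▸ hji

lemma numLinesThrough_le_four (x : ℤ × ℤ) : P.numLinesThrough x ≤ 4 := by
  have hinj : Set.InjOn P.d {i | x ∈ P.line i} := by
    intro i hi j hj hd
    by_contra hij
    exact disjoint_left.mp (P.disjoint_line hij hd) hi hj
  calc P.numLinesThrough x
      ≤ #({(1, 0), (0, 1), (1, 1), (1, -1)} : Finset (ℤ × ℤ)) :=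
        card_le_card_of_injOn P.d (fun i _ => Dir_eq ▸ P.d_mem i)
          (by simpa using hinj)
    _ ≤ 4 := card_le_four

lemma numLinesThrough_p_le (k : Fin N) : P.numLinesThrough (P.p k) ≤ N - k :=
  calc P.numLinesThrough (P.p k) ≤ #(Ici k) :=
        card_le_card fun _ hi => mem_Ici.mpr (P.le_of_p_mem_line (mem_filter.mp hi).2)
    _ = N - k := Fin.card_Ici k

lemma sum_numLinesThrough_le (s : Finset (ℤ × ℤ)) :
    ∑ x ∈ s, P.numLinesThrough x ≤ 4 * #s := by
  simpa [mul_comm] using sum_le_card_nsmul s _ 4 fun x _ => P.numLinesThrough_le_four x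

lemma sum_numLinesThrough_p_add_six_le (hN : 3 ≤ N) :
    ∑ k, P.numLinesThrough (P.p k) + 6 ≤ 4 * N := by
  have hle : ∑ k, P.numLinesThrough (P.p k) ≤ ∑ k : Fin N, min 4 (N - k) :=
    sum_le_sum fun k _ => le_min (P.numLinesThrough_le_four _) (P.numLinesThrough_p_le k)
  rw [Fin.sum_univ_eq_sum_range (fun k => min 4 (N - k))] at hle
  have := sum_range_min_four_sub_add_six_le hN
  omega

lemma sum_numLinesThrough_points : ∑ x ∈ P.points, P.numLinesThrough x = 5 * N := by
  have hline : ∀ i, P.points.bipartiteAbove (fun i x => x ∈ P.line i) i = P.line i :=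
    fun i => by
      rw [bipartiteAbove, filter_mem_eq_inter, inter_eq_right.mpr (P.line_subset_points i)]
  calc ∑ x ∈ P.points, P.numLinesThrough x
      = ∑ i, #(P.points.bipartiteAbove (fun i x => x ∈ P.line i) i) :=
        (sum_card_bipartiteAbove_eq_sum_card_bipartiteBelow _).symm
    _ = 5 * N := by simp [hline, card_line, mul_comm]

lemma sum_numLinesThrough_points_eq_add :
    ∑ x ∈ P.points, P.numLinesThrough x =
      ∑ x ∈ S0Finset, P.numLinesThrough x + ∑ k, P.numLinesThrough (P.p k) := by
  rw [points, sum_union P.disjoint_crosses_S0Finset, crosses,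
    sum_image fun i _ j _ h => P.p_injective h]

end Play

/-- In Morpion Solitaire 5D, the score of every play is at most 138;
equivalently, no play of length 139 exists. -/
theorem morpion5D_upper_bound_138 : ∀ N : ℕ, Play N → N ≤ 138 := by
  intro N P
  by_contra! hN
  have hS0 := P.sum_numLinesThrough_le S0Finset
  rw [card_S0Finset] at hS0
  have hcrosses := P.sum_numLinesThrough_p_add_six_le (by omega)
  have hcount := P.sum_numLinesThrough_points
  rw [P.sum_numLinesThrough_points_eq_add] at hcount
  omega
end

section
/- In Morpion Solitaire 5D, no play of length 142 exists; equivalently, the score of every play of Morpion Solitaire 5D is at most 141. -/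
/-!
After `N` moves the final configuration has `36 + N` points, and the lines of one direction are
pairwise disjoint 5-subsets of it, so each of the four directions carries at most `(36 + N) / 5`
lines. For `N ≥ 142` this forces `N = 144`, with the horizontal lines and the vertical lines each
tiling the 180 final points. But a set tiled both by horizontal and by vertical 5-segments meets
all 25 classes of `ℤ² / 5ℤ²` equally often: along a horizontal segment `x mod 5` takes every value
once while `y mod 5` is constant, and symmetrically for vertical ones. Hence 25 would divide 180.
-/

open Finset

def segF (q d : ℤ × ℤ) : Finset (ℤ × ℤ) := (range 5).image fun t : ℕ => q + (t : ℤ) • d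

lemma coe_segF (q d : ℤ × ℤ) : (segF q d : Set (ℤ × ℤ)) = seg q d := by
  ext p
  simp only [segF, coe_image, coe_range, Set.mem_image, Set.mem_Iio, seg, Set.mem_ofPred_eq]
  exact exists_congr fun t => and_congr (by omega) eq_comm

lemma card_segF (q : ℤ × ℤ) {d : ℤ × ℤ} (hd : d ≠ 0) : #(segF q d) = 5 := by
  refine (card_image_of_injective _ fun s t hst => ?_).trans (card_range 5)
  exact Nat.cast_injective (smul_left_injective ℤ hd (add_left_cancel hst))

instance : DecidablePred (· ∈ S0) := fun _ => inferInstanceAs (Decidable (_ ∨ _))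

-- `noncomputable` only because elaboration finds `Preorder ℤ` through a noncomputable
-- lattice instance; the kernel still evaluates `S0F`, see `card_S0F`.
noncomputable def S0F : Finset (ℤ × ℤ) := (Icc (0, 0) (9, 9)).filter (· ∈ S0)

lemma coe_S0F : (S0F : Set (ℤ × ℤ)) = S0 := by
  ext p
  simp only [S0F, coe_filter, mem_Icc, Set.mem_ofPred_eq, and_iff_right_iff_imp]
  intro hp
  simp only [S0, Set.mem_ofPred_eq] at hp
  constructor <;> constructor <;> omega

lemma card_S0F : #S0F = 36 := by decide

lemma card_filter_range_add_natCast_eq (c a : ZMod 5) :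
    #((range 5).filter fun t : ℕ => c + t = a) = 1 := by
  revert c a; decide

lemma card_filter_segF_eq (q : ℤ × ℤ) {d : ℤ × ℤ} {φ ψ : ℤ × ℤ →+ ZMod 5} (hφ : φ d = 1)
    (hψ : ψ d = 0) (a b : ZMod 5) :
    #((segF q d).filter fun x => φ x = a ∧ ψ x = b) = if ψ q = b then 1 else 0 := by
  have hd : d ≠ 0 := by rintro rfl; exact absurd hφ (by rw [map_zero]; decide)
  rw [segF, filter_image, card_image_of_injective _ fun s t hst =>
    Nat.cast_injective (smul_left_injective ℤ hd (add_left_cancel hst))]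
  simp only [map_add, map_zsmul, hφ, hψ, smul_zero, add_zero]
  simp only [zsmul_eq_mul, mul_one, Int.cast_natCast]
  split_ifs with hb
  · simpa only [hb, and_true] using card_filter_range_add_natCast_eq (φ q) a
  · simp [hb]

lemma card_filter_biUnion_segF {ι : Type*} {s : Finset ι} {q : ι → ℤ × ℤ} {d : ℤ × ℤ}
    (hs : (s : Set ι).PairwiseDisjoint fun i => segF (q i) d) {φ ψ : ℤ × ℤ →+ ZMod 5}
    (hφ : φ d = 1) (hψ : ψ d = 0) (a b : ZMod 5) :
    #((s.biUnion fun i => segF (q i) d).filter fun x => φ x = a ∧ ψ x = b) =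
      #(s.filter fun i => ψ (q i) = b) := by
  rw [filter_biUnion, card_biUnion (hs.mono fun i => filter_subset _ _), card_filter]
  simp only [card_filter_segF_eq _ hφ hψ]

lemma twentyFive_dvd_card_of_tiled {ι κ : Type*} {F : Finset (ℤ × ℤ)}
    {s : Finset ι} {qh : ι → ℤ × ℤ} {t : Finset κ} {qv : κ → ℤ × ℤ}
    (hsd : (s : Set ι).PairwiseDisjoint fun i => segF (qh i) (1, 0))
    (hs : s.biUnion (fun i => segF (qh i) (1, 0)) = F)
    (htd : (t : Set κ).PairwiseDisjoint fun j => segF (qv j) (0, 1))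
    (ht : t.biUnion (fun j => segF (qv j) (0, 1)) = F) :
    25 ∣ #F := by
  let φ : ℤ × ℤ →+ ZMod 5 := (Int.castAddHom (ZMod 5)).comp (AddMonoidHom.fst ℤ ℤ)
  let ψ : ℤ × ℤ →+ ZMod 5 := (Int.castAddHom (ZMod 5)).comp (AddMonoidHom.snd ℤ ℤ)
  let c (ab : ZMod 5 × ZMod 5) : ℕ := #(F.filter fun x => φ x = ab.1 ∧ ψ x = ab.2)
  have hrow (a b : ZMod 5) : c (a, b) = c (0, b) := by
    simp only [c, ← hs, card_filter_biUnion_segF hsd (φ := φ) (ψ := ψ) (by simp [φ]) (by simp [ψ])]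
  have hcol (a b : ZMod 5) : c (a, b) = c (a, 0) := by
    simp only [c, ← ht, and_comm (a := φ _ = _),
      card_filter_biUnion_segF htd (φ := ψ) (ψ := φ) (by simp [ψ]) (by simp [φ])]
  have hF : #F = ∑ ab : ZMod 5 × ZMod 5, c ab := by
    rw [card_eq_sum_card_fiberwise (f := fun x => (φ x, ψ x)) (t := univ) fun _ _ => mem_univ _]
    simp only [c, Prod.ext_iff]
  rw [hF, sum_congr rfl fun ab _ => (hrow ab.1 ab.2).trans (hcol 0 ab.2)]
  simp

namespace Play

variable {N : ℕ} (pl : Play N)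

lemma p_injective_s4 : Function.Injective pl.p := by
  intro i j hij
  by_contra hne
  rcases lt_or_gt_of_ne hne with h | h
  · exact pl.p_new j i h hij
  · exact pl.p_new i j h hij.symm

noncomputable def finalConfig : Finset (ℤ × ℤ) := S0F ∪ univ.image pl.p

lemma card_finalConfig : #pl.finalConfig = 36 + N := by
  have hdisj : Disjoint S0F (univ.image pl.p) := by
    simp only [disjoint_right, mem_image, mem_univ, true_and, forall_exists_index]
    rintro _ i rfl
    rw [← mem_coe, coe_S0F]
    exact pl.p_not_S0 i
  rw [finalConfig, card_union_of_disjoint hdisj, card_S0F, card_image_of_injective _ pl.p_injective_s4,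
    card_univ, Fintype.card_fin]

lemma segF_subset_finalConfig (i : Fin N) : segF (pl.q i) (pl.d i) ⊆ pl.finalConfig := by
  intro x hx
  rw [← mem_coe, coe_segF] at hx
  rcases pl.seg_sub i hx with hS0 | ⟨j, -, rfl⟩
  · exact mem_union_left _ (by rwa [← mem_coe, coe_S0F])
  · exact mem_union_right _ (mem_image_of_mem _ (mem_univ j))

def movesIn (d : ℤ × ℤ) : Finset (Fin N) := univ.filter (pl.d · = d)

lemma pairwiseDisjoint_movesIn (d : ℤ × ℤ) :
    (pl.movesIn d : Set (Fin N)).PairwiseDisjoint fun i => segF (pl.q i) d := by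
  intro i hi j hj hij
  simp only [movesIn, coe_filter, mem_univ, true_and, Set.mem_ofPred_eq] at hi hj
  subst hi
  rw [Function.onFun, ← disjoint_coe, coe_segF, coe_segF, Set.disjoint_iff_inter_eq_empty]
  rcases lt_or_gt_of_ne hij with h | h
  · have h_empty := pl.disj j i h hj.symm
    rwa [hj, Set.inter_comm] at h_empty
  · have h_empty := pl.disj i j h hj
    rwa [hj] at h_empty

lemma biUnion_movesIn_subset (d : ℤ × ℤ) :
    (pl.movesIn d).biUnion (fun i => segF (pl.q i) d) ⊆ pl.finalConfig :=
  biUnion_subset.2 fun i hi => (mem_filter.1 hi).2 ▸ pl.segF_subset_finalConfig i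

lemma card_biUnion_movesIn {d : ℤ × ℤ} (hd : d ∈ Dir) :
    #((pl.movesIn d).biUnion fun i => segF (pl.q i) d) = 5 * #(pl.movesIn d) := by
  rw [card_biUnion (pl.pairwiseDisjoint_movesIn d), sum_const_nat fun i _ =>
    card_segF _ (ne_zero_of_mem_Dir hd), mul_comm]

lemma five_mul_card_movesIn_le {d : ℤ × ℤ} (hd : d ∈ Dir) :
    5 * #(pl.movesIn d) ≤ 36 + N := by
  rw [← pl.card_biUnion_movesIn hd, ← pl.card_finalConfig]
  exact card_le_card (pl.biUnion_movesIn_subset d)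

lemma biUnion_movesIn_eq_finalConfig {d : ℤ × ℤ} (hd : d ∈ Dir)
    (h : 5 * #(pl.movesIn d) = 36 + N) :
    (pl.movesIn d).biUnion (fun i => segF (pl.q i) d) = pl.finalConfig :=
  eq_of_subset_of_card_le (pl.biUnion_movesIn_subset d) <| by
    rw [pl.card_finalConfig, pl.card_biUnion_movesIn hd, h]

lemma sum_card_movesIn :
    #(pl.movesIn (1, 0)) + #(pl.movesIn (0, 1)) + #(pl.movesIn (1, 1)) +
      #(pl.movesIn (1, -1)) = N := by
  have hmaps : ((univ : Finset (Fin N)) : Set (Fin N)).MapsTo pl.d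
      ({(1, 0), (0, 1), (1, 1), (1, -1)} : Finset (ℤ × ℤ)) := by
    intro i _
    simpa [Dir] using pl.d_mem i
  have h := card_eq_sum_card_fiberwise hmaps
  rw [card_univ, Fintype.card_fin] at h
  rw [sum_insert (by decide), sum_insert (by decide), sum_insert (by decide), sum_singleton] at h
  simp only [movesIn, h, add_assoc]

end Play

/-- In Morpion Solitaire 5D, the score of every play is at most 141;
equivalently, no play of length 142 exists. -/
theorem morpion5D_upper_bound_141 : ∀ N : ℕ, Play N → N ≤ 141 := by
  intro N pl
  by_contra! hN
  have hH := pl.five_mul_card_movesIn_le (d := (1, 0)) (by simp [Dir])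
  have hV := pl.five_mul_card_movesIn_le (d := (0, 1)) (by simp [Dir])
  have hD := pl.five_mul_card_movesIn_le (d := (1, 1)) (by simp [Dir])
  have hA := pl.five_mul_card_movesIn_le (d := (1, -1)) (by simp [Dir])
  have hsum := pl.sum_card_movesIn
  obtain ⟨hN, hH, hV⟩ : N = 144 ∧ 5 * #(pl.movesIn (1, 0)) = 36 + N ∧
      5 * #(pl.movesIn (0, 1)) = 36 + N := by omega
  have h25 := twentyFive_dvd_card_of_tiled (pl.pairwiseDisjoint_movesIn _)
    (pl.biUnion_movesIn_eq_finalConfig (by simp [Dir]) hH) (pl.pairwiseDisjoint_movesIn _)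
    (pl.biUnion_movesIn_eq_finalConfig (by simp [Dir]) hV)
  rw [pl.card_finalConfig, hN] at h25
  omega
end
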